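/- Define τ = 1/(ℓ-1) and the recursion T_g/|Sp_{2g}| = Σ_{r=1}^{g-1} [ℓ^{r²-r}/|GL_r(F_ℓ)|]·(1 - T_{g-r}/|Sp_{2(g-r)}|) + ℓ^{g²-g}/|GL_g(F_ℓ)|, with T_1/|Sp_2| = 1/(ℓ-1). Then for every g ≥ 1 there exists a constant c(g), independent of ℓ, such that |T_g/|Sp_{2g}| - 1/(ℓ-1)| ≤ c(g)/(ℓ-1)³ for all primes ℓ ≥ 3. -/

import Mathlib

/-- `|GL_r(F_ℓ)| = ℓ^{r(r-1)/2} ∏_{j=1}^{r}(ℓ^j - 1)`, as a real number. -/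
noncomputable def glOrder (ℓ r : ℕ) : ℝ :=
  (ℓ : ℝ) ^ (r * (r - 1) / 2) * ∏ j ∈ Finset.Icc 1 r, ((ℓ : ℝ) ^ j - 1)

lemma pow_ge_three {ℓ : ℕ} (hℓ : 3 ≤ ℓ) {j : ℕ} (hj : 1 ≤ j) : (3:ℝ) ≤ (ℓ:ℝ)^j := by
  have h3 : (3:ℝ) ≤ (ℓ:ℝ) := by exact_mod_cast hℓ
  calc (3:ℝ) ≤ (3:ℝ)^j := le_self_pow₀ (by norm_num) (by omega)
    _ ≤ (ℓ:ℝ)^j := pow_le_pow_left₀ (by norm_num) h3 j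

lemma glOrder_pos {ℓ : ℕ} (hℓ : 3 ≤ ℓ) (r : ℕ) : 0 < glOrder ℓ r := by
  have h3 : (3:ℝ) ≤ (ℓ:ℝ) := by exact_mod_cast hℓ
  apply mul_pos (pow_pos (by linarith) _)
  apply Finset.prod_pos
  intro j hj
  have := pow_ge_three hℓ (Finset.mem_Icc.mp hj).1
  linarith

lemma a_nonneg {ℓ : ℕ} (hℓ : 3 ≤ ℓ) (r : ℕ) : 0 ≤ (ℓ:ℝ) ^ (r^2 - r) / glOrder ℓ r := by
  have h := glOrder_pos hℓ r
  positivity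

lemma a_one {ℓ : ℕ} :
    (ℓ:ℝ) ^ (1^2 - 1) / glOrder ℓ 1 = 1 / ((ℓ:ℝ) - 1) := by
  simp [glOrder]

lemma a_two {ℓ : ℕ} (hℓ : 3 ≤ ℓ) :
    (ℓ:ℝ) ^ (2^2 - 2) / glOrder ℓ 2 = (ℓ:ℝ) / (((ℓ:ℝ) - 1) * ((ℓ:ℝ)^2 - 1)) := by
  have h3 : (3:ℝ) ≤ (ℓ:ℝ) := by exact_mod_cast hℓ
  have h1 : Finset.Icc 1 2 = ({1, 2} : Finset ℕ) := rfl
  have hne : (ℓ:ℝ) ≠ 0 := by linarith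
  have hd1 : (ℓ:ℝ) - 1 ≠ 0 := by linarith
  have hd2 : (ℓ:ℝ)^2 - 1 ≠ 0 := by nlinarith
  simp only [glOrder, h1]
  rw [Finset.prod_insert (by decide), Finset.prod_singleton]
  norm_num
  field_simp

lemma ratio_le {ℓ : ℕ} (hℓ : 3 ≤ ℓ) {r : ℕ} (hr : 1 ≤ r) :
    (ℓ:ℝ) ^ (r^2 - r) / glOrder ℓ r ≤ (3/2)^r / (ℓ:ℝ)^r := by
  have h3 : (3:ℝ) ≤ (ℓ:ℝ) := by exact_mod_cast hℓ
  set L : ℝ := (ℓ:ℝ) with hL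
  have hLpos : 0 < L := by linarith
  have hev : Even (r * (r - 1)) := by
    rcases r with _ | s
    · simp
    · simpa [Nat.mul_comm] using Nat.even_mul_succ_self s
  obtain ⟨m, hm⟩ := hev
  have hmul : r * (r - 1) = r * r - r := by
    rcases r with _ | s
    · simp
    · have h : (s+1)*(s+1) = (s+1)*s + (s+1) := by ring
      simp only [Nat.succ_sub_one]
      omega
  have h1 : r ^ 2 - r = m + m := by rw [pow_two, ← hmul, hm]
  have h2 : r * (r - 1) / 2 = m := by omega
  have h3' : (r + 1) * r = (m + r) + (m + r) := by
    rcases r with _ | s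
    · simp at hm ⊢; omega
    · have : (s + 1 + 1) * (s + 1) = (s + 1) * s + (s + 1) + (s + 1) := by ring
      simp [Nat.succ_sub_one] at hm
      omega
  have hsum : ∑ j ∈ Finset.Icc 1 r, j = m + r := by
    have : ∑ j ∈ Finset.range (r + 1), j = (r + 1) * r / 2 := by
      rw [Finset.sum_range_id]; simp
    have hIcc : ∑ j ∈ Finset.Icc 1 r, j = ∑ j ∈ Finset.range (r + 1), j := by
      rw [Finset.range_eq_Ico, ← Finset.Ico_add_one_right_eq_Icc]
      rw [Finset.sum_Ico_eq_sum_range, Finset.sum_Ico_eq_sum_range]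
      simp only [Nat.succ_sub_one, Nat.sub_zero, Nat.zero_add]
      rw [Finset.sum_range_succ']
      simp [add_comm]
    omega
  have hprod : (2/3:ℝ)^r * L^(m + r) ≤ ∏ j ∈ Finset.Icc 1 r, (L^j - 1) := by
    have : ∏ j ∈ Finset.Icc 1 r, ((2/3:ℝ) * L^j) ≤ ∏ j ∈ Finset.Icc 1 r, (L^j - 1) := by
      apply Finset.prod_le_prod
      · intro j hj
        positivity
      · intro j hj
        have := pow_ge_three hℓ (Finset.mem_Icc.mp hj).1
        rw [← hL] at this
        linarith
    calc (2/3:ℝ)^r * L^(m + r)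
        = ∏ j ∈ Finset.Icc 1 r, ((2/3:ℝ) * L^j) := by
          rw [Finset.prod_mul_distrib, Finset.prod_const, Nat.card_Icc,
            Finset.prod_pow_eq_pow_sum, hsum]
          simp
      _ ≤ _ := this
  have hglb : L^m * ((2/3:ℝ)^r * L^(m + r)) ≤ glOrder ℓ r := by
    rw [glOrder, h2, ← hL]
    exact mul_le_mul_of_nonneg_left hprod (by positivity)
  have hglbpos : 0 < L^m * ((2/3:ℝ)^r * L^(m + r)) := by positivity
  calc L ^ (r^2 - r) / glOrder ℓ r
      ≤ L ^ (r^2 - r) / (L^m * ((2/3:ℝ)^r * L^(m + r))) :=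
        div_le_div_of_nonneg_left (by positivity) hglbpos hglb
    _ = (3/2)^r / L^r := by
        rw [h1, pow_add, pow_add]
        field_simp
        ring_nf
        rw [← mul_pow]; norm_num

lemma a_ge3 {ℓ : ℕ} (hℓ : 3 ≤ ℓ) {r : ℕ} (hr : 3 ≤ r) :
    (ℓ:ℝ) ^ (r^2 - r) / glOrder ℓ r ≤ 8 / ((ℓ:ℝ) - 1)^3 := by
  have h3 : (3:ℝ) ≤ (ℓ:ℝ) := by exact_mod_cast hℓ
  set L : ℝ := (ℓ:ℝ) with hL
  have hLpos : 0 < L := by linarith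
  have hDpos : (0:ℝ) < L - 1 := by linarith
  obtain ⟨s, rfl⟩ : ∃ s, r = 3 + s := ⟨r - 3, by omega⟩
  calc L ^ ((3+s)^2 - (3+s)) / glOrder ℓ (3+s)
      ≤ (3/2)^(3+s) / L^(3+s) := ratio_le hℓ (by omega)
    _ = ((27/8) / L^3) * ((3/2)^s / L^s) := by
        rw [pow_add, pow_add]
        field_simp
        ring
    _ ≤ ((27/8) / L^3) * 1 := by
        apply mul_le_mul_of_nonneg_left _ (by positivity)
        rw [div_le_one (by positivity)]
        exact pow_le_pow_left₀ (by norm_num) (by linarith) s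
    _ = (27/8) / L^3 := by ring
    _ ≤ 8 / (L - 1)^3 := by
        rw [div_le_div_iff₀ (by positivity) (by positivity)]
        have h1 : (L-1)^3 ≤ L^3 := pow_le_pow_left₀ (by linarith) (by linarith) 3
        nlinarith [pow_pos hDpos 3, pow_pos hLpos 3]

set_option maxHeartbeats 1600000 in
lemma key (g : ℕ) : ∃ c : ℝ, 0 ≤ c ∧ ∀ ℓ : ℕ, 3 ≤ ℓ → ∀ t : ℕ → ℝ,
    t 1 = 1 / ((ℓ : ℝ) - 1) →
    (∀ k : ℕ, 2 ≤ k →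
      t k = (∑ r ∈ Finset.Icc 1 (k - 1),
          (ℓ : ℝ) ^ (r ^ 2 - r) / glOrder ℓ r * (1 - t (k - r)))
        + (ℓ : ℝ) ^ (k ^ 2 - k) / glOrder ℓ k) →
    ∀ m, 1 ≤ m → m ≤ g → |t m - 1 / ((ℓ : ℝ) - 1)| ≤ c / ((ℓ : ℝ) - 1) ^ 3 := by
  induction g with
  | zero => exact ⟨0, le_rfl, fun ℓ hℓ t ht1 htrec m hm1 hm2 => by omega⟩
  | succ g IH =>
    obtain ⟨c, hc0, hc⟩ := IH
    have hC0 : (0:ℝ) ≤ 9*(c+2) + 8*((g:ℝ)+2)*(c+2) + 9 + c := by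
      nlinarith [(Nat.cast_nonneg g : (0:ℝ) ≤ (g:ℝ))]
    refine ⟨9*(c+2) + 8*((g:ℝ)+2)*(c+2) + 9 + c, hC0, ?_⟩
    intro ℓ hℓ t ht1 htrec m hm1 hm2
    have h3 : (3:ℝ) ≤ (ℓ:ℝ) := by exact_mod_cast hℓ
    have hD : (2:ℝ) ≤ (ℓ:ℝ) - 1 := by linarith
    have hDpos : (0:ℝ) < (ℓ:ℝ) - 1 := by linarith
    have hD3 : (0:ℝ) < ((ℓ:ℝ) - 1)^3 := pow_pos hDpos 3
    have hgnn : (0:ℝ) ≤ (g:ℝ) := Nat.cast_nonneg g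
    have hgc : (0:ℝ) ≤ ((g:ℝ)+2)*(c+2) := by nlinarith
    rcases Nat.lt_or_ge m (g+1) with hlt | hge
    · -- m ≤ g : use IH with larger constant
      have := hc ℓ hℓ t ht1 htrec m hm1 (by omega)
      have hcc : c / ((ℓ:ℝ)-1)^3 ≤ (9*(c+2) + 8*((g:ℝ)+2)*(c+2) + 9 + c) / ((ℓ:ℝ)-1)^3 :=
        div_le_div_of_nonneg_right (by linarith) (le_of_lt hD3)
      linarith
    · have hmk : m = g + 1 := le_antisymm hm2 hge
      subst hmk
      rcases Nat.lt_or_ge g 1 with hg0 | hg1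
      · -- g = 0, m = 1
        interval_cases g
        rw [ht1]
        simp only [sub_self, abs_zero]
        exact div_nonneg (by push_cast; nlinarith) (le_of_lt hD3)
      rcases Nat.lt_or_ge g 2 with hg1' | hg2
      · -- g = 1, m = 2 : base computation
        interval_cases g
        have hrec2 := htrec 2 le_rfl
        have hIcc : Finset.Icc 1 (2-1) = ({1} : Finset ℕ) := rfl
        rw [hIcc, Finset.sum_singleton, a_one, a_two hℓ] at hrec2
        have h21 : (2:ℕ) - 1 = 1 := rfl
        rw [h21, ht1] at hrec2
        have hL2 : (0:ℝ) < (ℓ:ℝ)^2 - 1 := by nlinarith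
        have hval : t 2 - 1/((ℓ:ℝ)-1) = -(1/(((ℓ:ℝ)-1) * ((ℓ:ℝ)^2-1))) := by
          rw [hrec2]
          field_simp
          ring
        rw [hval, abs_neg, abs_of_pos (div_pos one_pos (mul_pos hDpos hL2))]
        calc 1/(((ℓ:ℝ)-1)*((ℓ:ℝ)^2-1)) ≤ 1/((ℓ:ℝ)-1)^3 := by
              apply div_le_div_of_nonneg_left one_pos.le hD3
              nlinarith
          _ ≤ (9*(c+2) + 8*(((1:ℕ):ℝ)+2)*(c+2) + 9 + c) / ((ℓ:ℝ)-1)^3 := by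
              apply div_le_div_of_nonneg_right _ (le_of_lt hD3)
              push_cast at hgc ⊢
              linarith
      · -- g ≥ 2, m = g+1 ≥ 3 : main case
        have hrecK := htrec (g+1) (by omega)
        have hs1 : Finset.Icc 1 (g+1-1) = insert 1 (Finset.Icc 2 g) := by
          ext x; simp only [Finset.mem_Icc, Finset.mem_insert]; omega
        have hs2 : Finset.Icc 2 g = insert 2 (Finset.Icc 3 g) := by
          ext x; simp only [Finset.mem_Icc, Finset.mem_insert]; omega
        rw [hs1, Finset.sum_insert (by simp), hs2, Finset.sum_insert (by simp),
          a_one, a_two hℓ] at hrecK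
        rw [show g + 1 - 1 = g from by omega, show g + 1 - 2 = g - 1 from by omega] at hrecK
        have hL2 : (0:ℝ) < (ℓ:ℝ)^2 - 1 := by nlinarith
        have hA2nn : 0 ≤ (ℓ:ℝ) / (((ℓ:ℝ) - 1) * ((ℓ:ℝ)^2 - 1)) :=
          le_of_lt (div_pos (by linarith) (mul_pos hDpos hL2))
        have hA2le : (ℓ:ℝ) / (((ℓ:ℝ) - 1) * ((ℓ:ℝ)^2 - 1)) ≤ (9/4) / ((ℓ:ℝ)-1)^2 := by
          have h := ratio_le hℓ (show 1 ≤ 2 by norm_num) (ℓ := ℓ)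
          rw [a_two hℓ] at h
          calc (ℓ:ℝ) / (((ℓ:ℝ) - 1) * ((ℓ:ℝ)^2 - 1)) ≤ (3/2)^2 / (ℓ:ℝ)^2 := h
            _ = (9/4) / (ℓ:ℝ)^2 := by norm_num
            _ ≤ (9/4) / ((ℓ:ℝ)-1)^2 := by
                apply div_le_div_of_nonneg_left (by norm_num) (pow_pos hDpos 2)
                apply pow_le_pow_left₀ (by linarith) (by linarith)
        have hB1 : |(ℓ:ℝ) / (((ℓ:ℝ) - 1) * ((ℓ:ℝ)^2 - 1)) - 1/((ℓ:ℝ)-1)^2| ≤ 1/((ℓ:ℝ)-1)^3 := by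
          have hv : (ℓ:ℝ) / (((ℓ:ℝ) - 1) * ((ℓ:ℝ)^2 - 1)) - 1/((ℓ:ℝ)-1)^2 = -(1/(((ℓ:ℝ)-1)^2 * ((ℓ:ℝ)+1))) := by
            field_simp
            ring
          rw [hv, abs_neg, abs_of_pos (div_pos one_pos (mul_pos (pow_pos hDpos 2) (by linarith)))]
          apply div_le_div_of_nonneg_left one_pos.le hD3
          nlinarith
        have hB2 : |t g - 1/((ℓ:ℝ)-1)| ≤ c/((ℓ:ℝ)-1)^3 := hc ℓ hℓ t ht1 htrec g (by omega) le_rfl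
        have hc3 : c/((ℓ:ℝ)-1)^3 ≤ c/((ℓ:ℝ)-1) :=
          div_le_div_of_nonneg_left hc0 hDpos (by nlinarith)
        have htbound : ∀ m', 1 ≤ m' → m' ≤ g → |t m'| ≤ (c+1)/((ℓ:ℝ)-1) := by
          intro m' h1' h2'
          have h := hc ℓ hℓ t ht1 htrec m' h1' h2'
          have habs : |t m'| ≤ |t m' - 1/((ℓ:ℝ)-1)| + 1/((ℓ:ℝ)-1) := by
            calc |t m'| = |(t m' - 1/((ℓ:ℝ)-1)) + 1/((ℓ:ℝ)-1)| := by congr 1; ring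
              _ ≤ |t m' - 1/((ℓ:ℝ)-1)| + |1/((ℓ:ℝ)-1)| := abs_add_le _ _
              _ = |t m' - 1/((ℓ:ℝ)-1)| + 1/((ℓ:ℝ)-1) := by
                  rw [abs_of_pos (div_pos one_pos hDpos)]
          have heq : (c+1)/((ℓ:ℝ)-1) = c/((ℓ:ℝ)-1) + 1/((ℓ:ℝ)-1) := by ring
          linarith
        have hB3 : |t (g-1)| ≤ (c+1)/((ℓ:ℝ)-1) := htbound (g-1) (by omega) (by omega)
        have hprod2 : |1/((ℓ:ℝ)-1) * (t g - 1/((ℓ:ℝ)-1))| ≤ c/((ℓ:ℝ)-1)^3 := by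
          rw [abs_mul, abs_of_pos (div_pos one_pos hDpos)]
          calc 1/((ℓ:ℝ)-1) * |t g - 1/((ℓ:ℝ)-1)| ≤ 1 * (c/((ℓ:ℝ)-1)^3) := by
                apply mul_le_mul _ hB2 (abs_nonneg _) zero_le_one
                rw [div_le_one hDpos]; linarith
            _ = c/((ℓ:ℝ)-1)^3 := one_mul _
        have hprod3 : |(ℓ:ℝ) / (((ℓ:ℝ) - 1) * ((ℓ:ℝ)^2 - 1)) * t (g-1)| ≤ (9/4)*(c+1)/((ℓ:ℝ)-1)^3 := by
          rw [abs_mul, abs_of_nonneg hA2nn]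
          calc (ℓ:ℝ) / (((ℓ:ℝ) - 1) * ((ℓ:ℝ)^2 - 1)) * |t (g-1)| ≤ ((9/4)/((ℓ:ℝ)-1)^2) * ((c+1)/((ℓ:ℝ)-1)) :=
                mul_le_mul hA2le hB3 (abs_nonneg _)
                  (le_of_lt (div_pos (by norm_num) (pow_pos hDpos 2)))
            _ = (9/4)*(c+1)/((ℓ:ℝ)-1)^3 := by
                rw [div_mul_div_comm, ← pow_succ]
        have hS : |∑ r ∈ Finset.Icc 3 g, (ℓ:ℝ) ^ (r^2 - r) / glOrder ℓ r * (1 - t (g+1-r))| ≤ ((g:ℝ)+2) * (8*(c+2)) / ((ℓ:ℝ)-1)^3 := by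
          calc |∑ r ∈ Finset.Icc 3 g, (ℓ:ℝ) ^ (r^2 - r) / glOrder ℓ r * (1 - t (g+1-r))|
              ≤ ∑ r ∈ Finset.Icc 3 g, |(ℓ:ℝ) ^ (r^2 - r) / glOrder ℓ r * (1 - t (g+1-r))| :=
                Finset.abs_sum_le_sum_abs _ _
            _ ≤ ∑ r ∈ Finset.Icc 3 g, 8*(c+2)/((ℓ:ℝ)-1)^3 := by
                apply Finset.sum_le_sum
                intro r hr
                obtain ⟨hr3, hrg⟩ := Finset.mem_Icc.mp hr
                have hArle : (ℓ:ℝ) ^ (r^2-r)/glOrder ℓ r ≤ 8/((ℓ:ℝ)-1)^3 := a_ge3 hℓ hr3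
                have hArnn : 0 ≤ (ℓ:ℝ) ^ (r^2-r)/glOrder ℓ r := a_nonneg hℓ r
                have h1t : |1 - t (g+1-r)| ≤ c+2 := by
                  have hb := htbound (g+1-r) (by omega) (by omega)
                  have h1 : (c+1)/((ℓ:ℝ)-1) ≤ c+1 := by
                    apply div_le_self (by linarith) (by linarith)
                  calc |1 - t (g+1-r)| ≤ |(1:ℝ)| + |t (g+1-r)| := abs_sub _ _
                    _ = 1 + |t (g+1-r)| := by rw [abs_one]
                    _ ≤ c+2 := by linarith
                rw [abs_mul, abs_of_nonneg hArnn]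
                calc (ℓ:ℝ) ^ (r^2-r)/glOrder ℓ r * |1 - t (g+1-r)|
                    ≤ (8/((ℓ:ℝ)-1)^3) * (c+2) :=
                      mul_le_mul hArle h1t (abs_nonneg _)
                        (le_of_lt (div_pos (by norm_num) hD3))
                  _ = 8*(c+2)/((ℓ:ℝ)-1)^3 := by ring
            _ = ((Finset.Icc 3 g).card : ℝ) * (8*(c+2)/((ℓ:ℝ)-1)^3) := by
                rw [Finset.sum_const, nsmul_eq_mul]
            _ ≤ ((g:ℝ)+2) * (8*(c+2)/((ℓ:ℝ)-1)^3) := by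
                apply mul_le_mul_of_nonneg_right _
                  (div_nonneg (by linarith) (le_of_lt hD3))
                rw [Nat.card_Icc]
                have : ((g+1-3 : ℕ):ℝ) ≤ (g:ℝ) := by exact_mod_cast (by omega : g+1-3 ≤ g)
                linarith
            _ = ((g:ℝ)+2) * (8*(c+2)) / ((ℓ:ℝ)-1)^3 := by ring
        have hAknn : 0 ≤ (ℓ:ℝ) ^ ((g+1)^2 - (g+1)) / glOrder ℓ (g+1) := a_nonneg hℓ (g+1)
        have hAkle : (ℓ:ℝ) ^ ((g+1)^2 - (g+1)) / glOrder ℓ (g+1) ≤ 8/((ℓ:ℝ)-1)^3 := a_ge3 hℓ (by omega)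
        have e1 : t (g+1) - 1/((ℓ:ℝ)-1) =
            ((ℓ:ℝ) / (((ℓ:ℝ) - 1) * ((ℓ:ℝ)^2 - 1)) - 1/((ℓ:ℝ)-1)^2) - (1/((ℓ:ℝ)-1)) * (t g - 1/((ℓ:ℝ)-1))
              - (ℓ:ℝ) / (((ℓ:ℝ) - 1) * ((ℓ:ℝ)^2 - 1)) * t (g-1) + (∑ r ∈ Finset.Icc 3 g, (ℓ:ℝ) ^ (r^2 - r) / glOrder ℓ r * (1 - t (g+1-r))) + (ℓ:ℝ) ^ ((g+1)^2 - (g+1)) / glOrder ℓ (g+1) := by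
          have h0 : ((ℓ:ℝ)-1) ≠ 0 := ne_of_gt hDpos
          have h1 : ((ℓ:ℝ)^2-1) ≠ 0 := ne_of_gt hL2
          rw [hrecK]
          field_simp
          ring
        obtain ⟨l1, u1⟩ := abs_le.mp hB1
        obtain ⟨l2, u2⟩ := abs_le.mp hprod2
        obtain ⟨l3, u3⟩ := abs_le.mp hprod3
        obtain ⟨l4, u4⟩ := abs_le.mp hS
        have hCsum : 1/((ℓ:ℝ)-1)^3 + c/((ℓ:ℝ)-1)^3 + (9/4)*(c+1)/((ℓ:ℝ)-1)^3
              + ((g:ℝ)+2)*(8*(c+2))/((ℓ:ℝ)-1)^3 + 8/((ℓ:ℝ)-1)^3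
            ≤ (9*(c+2) + 8*((g:ℝ)+2)*(c+2) + 9 + c) / ((ℓ:ℝ)-1)^3 := by
          rw [← add_div, ← add_div, ← add_div, ← add_div]
          apply div_le_div_of_nonneg_right _ (le_of_lt hD3)
          have hg8 : ((g:ℝ)+2)*(8*(c+2)) = 8*((g:ℝ)+2)*(c+2) := by ring
          linarith
        rw [abs_le]
        constructor
        · rw [e1]; linarith
        · rw [e1]; linarith

/-- For every `g ≥ 1` there is a constant `c(g)`, independent of `ℓ`, such that
for all primes `ℓ ≥ 3`, the ratios `t g = T_g / |Sp_{2g}(F_ℓ)|` defined by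
`t 1 = 1/(ℓ-1)` and the recursion
`t k = Σ_{r=1}^{k-1} [ℓ^{r²-r}/|GL_r|]·(1 - t (k-r)) + ℓ^{k²-k}/|GL_k|`
satisfy `|t g - 1/(ℓ-1)| ≤ c(g)/(ℓ-1)³`. -/
theorem ratio_eigenvalue_one_estimate (g : ℕ) (hg : 1 ≤ g) :
    ∃ c : ℝ, ∀ ℓ : ℕ, ℓ.Prime → 3 ≤ ℓ → ∀ t : ℕ → ℝ,
      t 1 = 1 / ((ℓ : ℝ) - 1) →
      (∀ k : ℕ, 2 ≤ k →
        t k = (∑ r ∈ Finset.Icc 1 (k - 1),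
            (ℓ : ℝ) ^ (r ^ 2 - r) / glOrder ℓ r * (1 - t (k - r)))
          + (ℓ : ℝ) ^ (k ^ 2 - k) / glOrder ℓ k) →
      |t g - 1 / ((ℓ : ℝ) - 1)| ≤ c / ((ℓ : ℝ) - 1) ^ 3 := by
  obtain ⟨c, hc0, hc⟩ := key g
  exact ⟨c, fun ℓ hp hℓ t ht1 hrec => hc ℓ hℓ t ht1 hrec g hg le_rfl⟩
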